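/- Let S be an infinite finitely generated semigroup with rational word problem. Then S is not periodic: there exists y ∈ S such that the monogenic subsemigroup ⟨y⟩ is infinite. -/

import Mathlib

/-- An asynchronous two-tape finite state automaton: in each step it reads at
most one symbol from each tape. -/
structure AsyncFSA (A : Type*) (B : Type*) where
  Q : Type
  [fin : Finite Q]
  init : Q
  accept : Set Q
  trans : Q → Option A → Option B → Q → Prop

namespace AsyncFSA

variable {A B : Type*}

/-- Computations of an asynchronous automaton. -/
inductive Reaches (M : AsyncFSA A B) : M.Q → List A → List B → M.Q → Prop
  | refl (q : M.Q) : Reaches M q [] [] q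
  | step {p q r : M.Q} {a : Option A} {b : Option B} {u : List A} {v : List B} :
      M.trans p a b q → Reaches M q u v r →
      Reaches M p (a.toList ++ u) (b.toList ++ v) r

/-- Acceptance of a pair of strings. -/
def Accepts (M : AsyncFSA A B) (u : List A) (v : List B) : Prop :=
  ∃ q ∈ M.accept, M.Reaches M.init u v q

end AsyncFSA

/-- A relation on strings is rational if it is decided by an asynchronous
two-tape finite state automaton. -/
def IsRationalRel {A B : Type*} (R : Set (List A × List B)) : Prop :=
  ∃ M : AsyncFSA A B, ∀ p : List A × List B, p ∈ R ↔ M.Accepts p.1 p.2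

/-- Pad a pair of strings to equal length, using `none` as padding symbol. -/
def padPair {A : Type*} (p : List A × List A) : List (Option A × Option A) :=
  List.zip (p.1.map some ++ List.replicate (p.2.length - p.1.length) none)
           (p.2.map some ++ List.replicate (p.1.length - p.2.length) none)

/-- A relation on strings is regular if a synchronous two-tape finite state
automaton (a finite automaton over the padded pair alphabet) accepts a padded
pair exactly when the pair is in the relation. -/
def IsRegularRel {A : Type*} (R : Set (List A × List A)) : Prop :=
  ∃ (Q : Type) (_ : Fintype Q) (M : DFA (Option A × Option A) Q),
    ∀ p : List A × List A, p ∈ R ↔ padPair p ∈ M.accepts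

/-- A language is regular if accepted by a finite state automaton. -/
def IsRegularLang {A : Type*} (L : Set (List A)) : Prop :=
  ∃ (Q : Type) (_ : Fintype Q) (M : DFA A Q), ∀ w, w ∈ L ↔ w ∈ M.accepts

/-- Evaluation of a word in a semigroup (`none` for the empty word). -/
def evalWord {α : Type*} {S : Type*} [Semigroup S] (f : α → S) : List α → Option S
  | [] => none
  | a :: l => some (List.foldl (fun s x => s * f x) (f a) l)

/-- The semigroup word problem with respect to a set `A` of elements:
pairs of nonempty strings over `A` representing the same element. -/
def SWP {S : Type*} [Semigroup S] (A : Set S) : Set (List ↥A × List ↥A) :=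
  {p | p.1 ≠ [] ∧ p.2 ≠ [] ∧
    evalWord Subtype.val p.1 = evalWord Subtype.val p.2}

/-- The monoid word problem with respect to a set `A` of elements. -/
def MWP {M : Type*} [Monoid M] (A : Set M) : Set (List ↥A × List ↥A) :=
  {p | (p.1.map Subtype.val).prod = (p.2.map Subtype.val).prod}

/-- A semigroup has rational word problem if it has a finite generating set
with rational word problem. -/
def HasRationalWP (S : Type*) [Semigroup S] : Prop :=
  ∃ A : Set S, A.Finite ∧ Subsemigroup.closure A = ⊤ ∧ IsRationalRel (SWP A)


/-!
Suppose every element of `S` has finite order, and let `M` be an asynchronous automaton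
recognising the word problem. Call `w` loop-reducible if some accepting run of `M` on a pair
`(w, v)` contains a cycle that reads a nonempty factor of `w` and nothing of `v`. These words form
a regular language `L`, and deleting the cycle gives a shorter word equal to `w` in `S`. So
shortest representatives avoid `L`, the complement of `L` is infinite, and by the pumping lemma
it contains all `x yᵐ z`. Since `y` has finite order, the words `x y^(i + t p) z` all represent
one element; in an accepting run pairing a very long one with a fixed short one, some silent
stretch outlasts the number of states and pigeonhole produces a silent cycle, putting the long
word in `L`.
-/

namespace εNFA

variable {α σ : Type*} {N : εNFA α σ} {s t u : σ} {x y : List α}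

theorem self_mem_evalFrom_nil : s ∈ N.evalFrom {s} [] :=
  N.evalFrom_nil _ ▸ N.subset_εClosure _ rfl

theorem mem_evalFrom_append (hx : t ∈ N.evalFrom {s} x) (hy : u ∈ N.evalFrom {t} y) :
    u ∈ N.evalFrom {s} (x ++ y) := by
  rw [mem_evalFrom_iff_exists_path] at hx hy ⊢
  obtain ⟨x', rfl, hx⟩ := hx
  obtain ⟨y', rfl, hy⟩ := hy
  exact ⟨x' ++ y', List.reduceOption_append x' y', N.isPath_append.2 ⟨t, hx, hy⟩⟩

theorem mem_evalFrom_of_mem_step {a : Option α} (h : t ∈ N.step s a) :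
    t ∈ N.evalFrom {s} a.toList := by
  rw [mem_evalFrom_iff_exists_path]
  exact ⟨[a], by cases a <;> rfl, N.isPath_singleton.2 h⟩

end εNFA

theorem Language.IsRegular.exists_pumping_of_infinite {α : Type*} [Finite α] {L : Language α}
    (hL : L.IsRegular) (hinf : Set.Infinite L) :
    ∃ x y z : List α, y ≠ [] ∧ ∀ m, x ++ (List.replicate m y).flatten ++ z ∈ L := by
  obtain ⟨σ, _, M, rfl⟩ := hL
  obtain ⟨w, hw, hlen⟩ : ∃ w ∈ M.accepts, Fintype.card σ ≤ w.length := by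
    by_contra! h
    exact hinf ((List.finite_length_lt α (Fintype.card σ)).subset h)
  obtain ⟨x, y, z, -, -, hy, hpump⟩ := M.pumping_lemma hw hlen
  refine ⟨x, y, z, hy, fun m => hpump ?_⟩
  exact Language.append_mem_mul (Language.append_mem_mul rfl
    (Language.mem_kstar.2 ⟨_, rfl, fun w hw => List.eq_of_mem_replicate hw⟩)) rfl

theorem exists_pow_add_mul_eq_pow {M : Type*} [Monoid M] {g : M}
    (h : (Set.range (g ^ · : ℕ → M)).Finite) :
    ∃ i p, 0 < p ∧ ∀ t, g ^ (i + t * p) = g ^ i := by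
  obtain ⟨m, n, hmn, he⟩ := h.exists_lt_map_eq_of_forall_mem Set.mem_range_self
  refine ⟨m, n - m, by omega, fun t => ?_⟩
  induction t with
  | zero => simp
  | succ t ih => calc
    g ^ (m + (t + 1) * (n - m)) = g ^ (m + t * (n - m)) * g ^ (n - m) := by
      rw [← pow_add]; ring_nf
    _ = g ^ m := by rw [ih, ← pow_add, Nat.add_sub_cancel' hmn.le, he]

attribute [instance] AsyncFSA.fin

namespace AsyncFSA

variable {A B : Type*} (M : AsyncFSA A B)

/-- The cycle `p → p' ⇝ p` begins with a transition reading a letter, so that the detector below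
can enter it on that letter and needs no flag recording that the cycle reads something. -/
def HasSilentLoop (q : M.Q) (w : List A) (v : List B) (r : M.Q) : Prop :=
  ∃ x a β y v₁ v₂ p p', w = x ++ a :: β ++ y ∧ v = v₁ ++ v₂ ∧ M.Reaches q x v₁ p ∧
    M.trans p (some a) none p' ∧ M.Reaches p' β [] p ∧ M.Reaches p y v₂ r

def loopLanguage : Language A :=
  {w | ∃ v, ∃ f ∈ M.accept, M.HasSilentLoop M.init w v f}

variable {M}

theorem Reaches.append {q r s : M.Q} {u w : List A} {u' w' : List B}
    (h₁ : M.Reaches q u u' r) (h₂ : M.Reaches r w w' s) : M.Reaches q (u ++ w) (u' ++ w') s := by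
  induction h₁ with
  | refl => exact h₂
  | step ht _ ih => simpa only [List.append_assoc] using Reaches.step ht (ih h₂)

theorem HasSilentLoop.cons {q q' r : M.Q} {a : Option A} {b : Option B} {w : List A}
    {v : List B} (ht : M.trans q a b q') (h : M.HasSilentLoop q' w v r) :
    M.HasSilentLoop q (a.toList ++ w) (b.toList ++ v) r := by
  obtain ⟨x, c, β, y, v₁, v₂, p, p', rfl, rfl, hx, hc, hβ, hy⟩ := h
  exact ⟨a.toList ++ x, c, β, y, b.toList ++ v₁, v₂, p, p', by simp, by simp,
    Reaches.step ht hx, hc, hβ, hy⟩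

/-- Pigeonhole on the states from which letters are read silently since the last output
symbol: `s` collects those states of the current silent stretch. -/
theorem Reaches.hasSilentLoop_or_revisit {q r : M.Q} {w : List A} {v : List B}
    (h : M.Reaches q w v r) (s : Finset M.Q)
    (hlen : (Nat.card M.Q + 1) * (v.length + 1) ≤ w.length + s.card) :
    M.HasSilentLoop q w v r ∨
      ∃ p ∈ s, ∃ x y, w = x ++ y ∧ M.Reaches q x [] p ∧ M.Reaches p y v r := by
  classical
  have hcard (s : Finset M.Q) : s.card ≤ Nat.card M.Q := by
    simpa using Set.ncard_le_card (s : Set M.Q)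
  induction h generalizing s with
  | refl q =>
    simp only [List.length_nil, zero_add, mul_one] at hlen
    have := hcard s
    omega
  | @step q q' r a b w v ht hr ih =>
    rcases b with _ | b
    · rcases a with _ | a
      · rcases ih s (by simpa using hlen) with hl | ⟨p, hp, x, y, rfl, hx, hy⟩
        · exact .inl (by simpa using hl.cons ht)
        · exact .inr ⟨p, hp, x, y, rfl, by simpa using Reaches.step ht hx, hy⟩
      by_cases hq : q ∈ s
      · exact .inr ⟨q, hq, [], _, rfl, .refl q, Reaches.step ht hr⟩
      have hlen' : (Nat.card M.Q + 1) * (v.length + 1) ≤ w.length + (insert q s).card := by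
        simp only [List.length_append, Option.toList_some, Option.toList_none,
          List.length_singleton, List.length_nil, zero_add] at hlen
        rw [Finset.card_insert_of_notMem hq]
        omega
      rcases ih (insert q s) hlen' with hl | ⟨p, hp, x, y, rfl, hx, hy⟩
      · exact .inl (by simpa using hl.cons ht)
      rcases Finset.mem_insert.1 hp with rfl | hp
      · exact .inl ⟨[], a, x, y, [], v, p, q', rfl, rfl, .refl p, ht, hx, hy⟩
      · exact .inr ⟨p, hp, a :: x, y, rfl, by simpa using Reaches.step ht hx, hy⟩
    · have hlen' : (Nat.card M.Q + 1) * (v.length + 1) ≤ w.length + (∅ : Finset M.Q).card := by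
        have hw : a.toList.length ≤ 1 := by cases a <;> simp
        have := hcard s
        simp only [List.length_append, Option.toList_some, List.length_singleton] at hlen
        rw [Finset.card_empty]
        nlinarith
      rcases ih ∅ hlen' with hl | ⟨p, hp, -⟩
      · exact .inl (hl.cons ht)
      · simp at hp

theorem Reaches.hasSilentLoop {q r : M.Q} {w : List A} {v : List B} (h : M.Reaches q w v r)
    (hlen : (Nat.card M.Q + 1) * (v.length + 1) ≤ w.length) : M.HasSilentLoop q w v r := by
  simpa using h.hasSilentLoop_or_revisit ∅ (by simpa using hlen)

theorem mem_loopLanguage_of_accepts {w : List A} {v : List B} (h : M.Accepts w v)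
    (hlen : (Nat.card M.Q + 1) * (v.length + 1) ≤ w.length) : w ∈ M.loopLanguage := by
  obtain ⟨f, hf, hrun⟩ := h
  exact ⟨v, f, hf, hrun.hasSilentLoop hlen⟩

theorem exists_shorter_of_mem_loopLanguage {w : List A} (h : w ∈ M.loopLanguage) :
    ∃ w' v, w'.length < w.length ∧ M.Accepts w v ∧ M.Accepts w' v := by
  obtain ⟨v, f, hf, x, a, β, y, v₁, v₂, p, p', rfl, rfl, hx, ha, hβ, hy⟩ := h
  refine ⟨x ++ y, v₁ ++ v₂, by simp, ⟨f, hf, ?_⟩, f, hf, hx.append hy⟩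
  simpa using hx.append ((Reaches.step ha hβ).append hy)

inductive LoopPhase (Q : Type)
  | before (q : Q)
  | inLoop (anchor q : Q)
  | after (q : Q)

instance {Q : Type} [Finite Q] : Finite (LoopPhase Q) :=
  Finite.of_surjective (Sum.elim .before (Sum.elim (Function.uncurry .inLoop) .after))
    (by rintro (q | ⟨p, q⟩ | q) <;> simp)

variable (M) in
inductive DetectorStep : LoopPhase M.Q → Option A → LoopPhase M.Q → Prop
  | before {q q' a b} : M.trans q a b q' → DetectorStep (.before q) a (.before q')
  | enter {p q' a} : M.trans p (some a) none q' → DetectorStep (.before p) (some a) (.inLoop p q')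
  | inLoop {p q q' a} : M.trans q a none q' → DetectorStep (.inLoop p q) a (.inLoop p q')
  | exit {p} : DetectorStep (.inLoop p p) none (.after p)
  | after {q q' a b} : M.trans q a b q' → DetectorStep (.after q) a (.after q')

variable (M) in
def loopDetector : εNFA A (LoopPhase M.Q) where
  step c a := {c' | M.DetectorStep c a c'}
  start := {.before M.init}
  accept := .after '' M.accept

variable (M) in
def CanAccept : LoopPhase M.Q → List A → Prop
  | .before q, w => ∃ v, ∃ f ∈ M.accept, M.HasSilentLoop q w v f
  | .inLoop p q, w => ∃ β y v, ∃ f ∈ M.accept, w = β ++ y ∧ M.Reaches q β [] p ∧ M.Reaches p y v f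
  | .after q, w => ∃ v, ∃ f ∈ M.accept, M.Reaches q w v f

theorem canAccept_of_isPath {c c' : LoopPhase M.Q} {x : List (Option A)}
    (h : M.loopDetector.IsPath c c' x) (hc' : c' ∈ M.loopDetector.accept) :
    M.CanAccept c x.reduceOption := by
  induction h with
  | nil c =>
    obtain ⟨f, hf, rfl⟩ := hc'
    exact ⟨[], f, hf, .refl f⟩
  | cons t s u a x hst _ ih =>
    have hx : (a :: x).reduceOption = a.toList ++ x.reduceOption := by cases a <;> simp
    rw [hx]
    cases hst with
    | before ht =>
      obtain ⟨v, f, hf, hl⟩ := ih hc'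
      exact ⟨_, f, hf, hl.cons ht⟩
    | enter ht =>
      obtain ⟨β, y, v, f, hf, hxy, hβ, hy⟩ := ih hc'
      exact ⟨v, f, hf, [], _, β, y, [], v, _, _, by simp [hxy], rfl, .refl _, ht, hβ, hy⟩
    | inLoop ht =>
      obtain ⟨β, y, v, f, hf, hxy, hβ, hy⟩ := ih hc'
      exact ⟨a.toList ++ β, y, v, f, hf, by simp [hxy], by simpa using Reaches.step ht hβ, hy⟩
    | exit =>
      obtain ⟨v, f, hf, hy⟩ := ih hc'
      exact ⟨[], _, v, f, hf, rfl, .refl _, hy⟩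
    | after ht =>
      obtain ⟨v, f, hf, hy⟩ := ih hc'
      exact ⟨_, f, hf, Reaches.step ht hy⟩

theorem Reaches.mem_evalFrom {σ : Type*} {N : εNFA A σ} (φ : M.Q → σ)
    (hφ : ∀ {q a b q'}, M.trans q a b q' → φ q' ∈ N.step (φ q) a)
    {q r : M.Q} {w : List A} {v : List B} (h : M.Reaches q w v r) :
    φ r ∈ N.evalFrom {φ q} w := by
  induction h with
  | refl q => exact N.self_mem_evalFrom_nil
  | step ht _ ih => exact εNFA.mem_evalFrom_append (εNFA.mem_evalFrom_of_mem_step (hφ ht)) ih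

theorem Reaches.mem_evalFrom_of_silent {σ : Type*} {N : εNFA A σ} (φ : M.Q → σ)
    (hφ : ∀ {q a q'}, M.trans q a none q' → φ q' ∈ N.step (φ q) a)
    {q r : M.Q} {w : List A} (h : M.Reaches q w [] r) :
    φ r ∈ N.evalFrom {φ q} w := by
  generalize hv : ([] : List B) = v at h
  induction h with
  | refl q => exact N.self_mem_evalFrom_nil
  | @step _ _ _ a b _ _ ht _ ih =>
    cases b with
    | none => exact εNFA.mem_evalFrom_append (εNFA.mem_evalFrom_of_mem_step (hφ ht)) (ih hv)
    | some b => simp at hv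

theorem loopDetector_accepts : M.loopDetector.accepts = M.loopLanguage := by
  ext w
  constructor
  · rw [εNFA.mem_accepts_iff_exists_path]
    rintro ⟨_, c', x, rfl, hc', rfl, hx⟩
    exact canAccept_of_isPath hx hc'
  · rintro ⟨v, f, hf, x, a, β, y, v₁, v₂, p, p', rfl, rfl, hx, ha, hβ, hy⟩
    refine ⟨.after f, ⟨f, hf, rfl⟩, ?_⟩
    change _ ∈ M.loopDetector.evalFrom {.before M.init} _
    have hpre := hx.mem_evalFrom (N := M.loopDetector) .before DetectorStep.before
    have hloop := hβ.mem_evalFrom_of_silent (N := M.loopDetector) (.inLoop p) DetectorStep.inLoop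
    have hpost := hy.mem_evalFrom (N := M.loopDetector) .after DetectorStep.after
    have henter := εNFA.mem_evalFrom_of_mem_step (N := M.loopDetector) (DetectorStep.enter ha)
    have hexit := εNFA.mem_evalFrom_of_mem_step (N := M.loopDetector) (a := none)
      (DetectorStep.exit (p := p))
    simpa using εNFA.mem_evalFrom_append hpre (εNFA.mem_evalFrom_append henter
      (εNFA.mem_evalFrom_append hloop (εNFA.mem_evalFrom_append hexit hpost)))

theorem isRegular_loopLanguage : M.loopLanguage.IsRegular := by
  classical
  have := Fintype.ofFinite (LoopPhase M.Q)
  exact ⟨_, inferInstance, M.loopDetector.toNFA.toDFA, by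
    rw [NFA.toDFA_correct, εNFA.toNFA_correct, loopDetector_accepts]⟩

end AsyncFSA

section WordValue

variable {α S : Type*} [Semigroup S]

/-- The value of a word in `WithOne S`; unlike `evalWord`, it is multiplicative on all words. -/
def wordValue (f : α → S) (w : List α) : WithOne S :=
  (w.map fun a => (f a : WithOne S)).prod

@[simp]
theorem wordValue_append (f : α → S) (u w : List α) :
    wordValue f (u ++ w) = wordValue f u * wordValue f w := by
  simp [wordValue]

@[simp]
theorem wordValue_nil (f : α → S) : wordValue f [] = 1 := rfl

theorem wordValue_flatten_replicate (f : α → S) (w : List α) (k : ℕ) :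
    wordValue f (List.replicate k w).flatten = wordValue f w ^ k := by
  induction k with
  | zero => simp
  | succ k ih => simp [List.replicate_succ, ih, pow_succ']

theorem coe_foldl_mul (f : α → S) (l : List α) (s : S) :
    ((l.foldl (· * f ·) s : S) : WithOne S) = s * wordValue f l := by
  induction l generalizing s with
  | nil => simp [wordValue]
  | cons a l ih => simp [ih, wordValue, mul_assoc]

theorem evalWord_eq_some_iff {f : α → S} {w : List α} {s : S} :
    evalWord f w = some s ↔ wordValue f w = s := by
  cases w with
  | nil => simp [evalWord, wordValue]
  | cons a l =>
    rw [evalWord, Option.some_inj, ← WithOne.coe_inj, coe_foldl_mul]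
    simp [wordValue]

theorem exists_wordValue_eq_coe {f : α → S} {w : List α} (hw : w ≠ []) :
    ∃ s : S, wordValue f w = s := by
  obtain ⟨a, l, rfl⟩ := List.exists_cons_of_ne_nil hw
  exact ⟨_, evalWord_eq_some_iff.1 rfl⟩

theorem mem_SWP_iff {A : Set S} {u w : List A} :
    (u, w) ∈ SWP A ↔ u ≠ [] ∧ w ≠ [] ∧ wordValue Subtype.val u = wordValue Subtype.val w := by
  refine and_congr_right fun hu => and_congr_right fun _ => ?_
  obtain ⟨s, hs⟩ := exists_wordValue_eq_coe (f := Subtype.val) hu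
  rw [evalWord_eq_some_iff.2 hs, hs, eq_comm, evalWord_eq_some_iff, eq_comm]

theorem exists_wordValue_eq {A : Set S} (hgen : Subsemigroup.closure A = ⊤) (s : S) :
    ∃ w : List A, wordValue Subtype.val w = s := by
  induction hgen ▸ Subsemigroup.mem_top s using Subsemigroup.closure_induction with
  | mem s hs => exact ⟨[⟨s, hs⟩], by simp [wordValue]⟩
  | mul s t _ _ hs ht =>
    obtain ⟨u, hu⟩ := hs
    obtain ⟨w, hw⟩ := ht
    exact ⟨u ++ w, by simp [hu, hw]⟩

theorem coe_pow_succ_mem_closure (g : S) (n : ℕ) :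
    (g : WithOne S) ^ (n + 1) ∈ (↑) '' (Subsemigroup.closure {g} : Set S) := by
  induction n with
  | zero => exact ⟨g, Subsemigroup.subset_closure rfl, by simp⟩
  | succ n ih =>
    obtain ⟨s, hs, hs'⟩ := ih
    exact ⟨s * g, mul_mem hs (Subsemigroup.subset_closure rfl),
      by rw [WithOne.coe_mul, hs', ← pow_succ]⟩

theorem finite_range_coe_pow {g : S} (h : (Subsemigroup.closure {g} : Set S).Finite) :
    (Set.range ((g : WithOne S) ^ · : ℕ → WithOne S)).Finite := by
  refine ((h.image (↑)).insert 1).subset ?_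
  rintro _ ⟨_ | n, rfl⟩
  · exact Set.mem_insert _ _
  · exact Set.mem_insert_of_mem _ (coe_pow_succ_mem_closure g n)

end WordValue

section WordProblem

variable {S : Type*} [Semigroup S] {A : Set S} {M : AsyncFSA A A}

theorem exists_wordValue_eq_notMem_loopLanguage (hM : ∀ p, p ∈ SWP A ↔ M.Accepts p.1 p.2)
    {w : List A} {s : S} (hw : wordValue Subtype.val w = s) :
    ∃ w' ∉ M.loopLanguage, wordValue Subtype.val w' = s := by
  induction hn : w.length using Nat.strong_induction_on generalizing w with
  | _ n ih =>
  by_cases hL : w ∈ M.loopLanguage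
  · obtain ⟨w', v, hlt, hwv, hw'v⟩ := M.exists_shorter_of_mem_loopLanguage hL
    obtain ⟨-, -, hwv⟩ := mem_SWP_iff.1 ((hM (w, v)).2 hwv)
    obtain ⟨-, -, hw'v⟩ := mem_SWP_iff.1 ((hM (w', v)).2 hw'v)
    exact ih _ (hn ▸ hlt) (by rw [hw'v, ← hwv, hw]) rfl
  · exact ⟨w, hL, hw⟩

theorem infinite_compl_loopLanguage [Infinite S] (hgen : Subsemigroup.closure A = ⊤)
    (hM : ∀ p, p ∈ SWP A ↔ M.Accepts p.1 p.2) : Set.Infinite M.loopLanguageᶜ := by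
  refine Set.Infinite.of_image (wordValue Subtype.val)
    ((Set.infinite_range_of_injective WithOne.coe_injective).mono ?_)
  rintro _ ⟨s, rfl⟩
  obtain ⟨w, hw⟩ := exists_wordValue_eq hgen s
  obtain ⟨w', hw', hw's⟩ := exists_wordValue_eq_notMem_loopLanguage hM hw
  exact ⟨w', hw', hw's⟩

end WordProblem

/-- An infinite finitely generated semigroup with rational word problem is not
periodic: some element generates an infinite monogenic subsemigroup. -/
theorem stmt_12 {S : Type*} [Semigroup S] [Infinite S] (A : Set S)
    (hA : A.Finite) (hgen : Subsemigroup.closure A = ⊤)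
    (hrat : IsRationalRel (SWP A)) :
    ∃ y : S, ((Subsemigroup.closure {y} : Subsemigroup S) : Set S).Infinite := by
  by_contra! hper
  obtain ⟨M, hM⟩ := hrat
  have := hA.to_subtype
  obtain ⟨x, y, z, hy, hpump⟩ :=
    M.isRegular_loopLanguage.compl.exists_pumping_of_infinite (infinite_compl_loopLanguage hgen hM)
  obtain ⟨g, hg⟩ := exists_wordValue_eq_coe (f := Subtype.val) hy
  obtain ⟨i, p, hp, hperiod⟩ := exists_pow_add_mul_eq_pow (finite_range_coe_pow (hper g))
  set W : ℕ → List A := fun t => x ++ (List.replicate (i + t * p) y).flatten ++ z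
  have hW (t : ℕ) : wordValue Subtype.val (W t) = wordValue Subtype.val (W 1) := by
    simp only [W, wordValue_append, wordValue_flatten_replicate, hg, hperiod]
  have hlen (t : ℕ) : t ≤ (W t).length := calc
    t ≤ i + t * p := by nlinarith
    _ ≤ (i + t * p) * y.length := Nat.le_mul_of_pos_right _ (List.length_pos_iff.2 hy)
    _ ≤ (W t).length := by
      simp only [W, List.length_append, List.length_flatten, List.map_replicate,
        List.sum_replicate, smul_eq_mul]
      omega
  set n := (Nat.card M.Q + 1) * ((W 1).length + 1)
  have hne (t : ℕ) (ht : 0 < t) : W t ≠ [] := List.ne_nil_of_length_pos (ht.trans_le (hlen t))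
  have hacc : M.Accepts (W n) (W 1) :=
    (hM _).1 (mem_SWP_iff.2 ⟨hne n (by positivity), hne 1 one_pos, hW n⟩)
  exact hpump (i + n * p) (M.mem_loopLanguage_of_accepts hacc (hlen n))
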